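/- arXiv:2605.11888 — 6 statements merged into one kernel-verified Lean document; each statement's English description precedes it below -/
import Mathlib

section
/- Let W be the subgroup of PGL₂(ℂ) generated by ω₁ and ω₂, and let N be the normalizer of W in PGL₂(ℂ). Then the quotient group N/W is isomorphic to the symmetric group S₃ on three letters. -/
/-- `PGL₂(ℂ)`: the quotient of `GL₂(ℂ)` by its center. -/
noncomputable abbrev PGL2C : Type :=
  GL (Fin 2) ℂ ⧸ Subgroup.center (GL (Fin 2) ℂ)

/-- `ω₁`, the class of the matrix `[[-1,0],[0,1]]` in `PGL₂(ℂ)`. -/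
noncomputable def omega1 : PGL2C :=
  QuotientGroup.mk (Matrix.GeneralLinearGroup.mkOfDetNeZero !![(-1 : ℂ), 0; 0, 1]
    (by simp [Matrix.det_fin_two_of]))

/-- `ω₂`, the class of the matrix `[[0,1],[1,0]]` in `PGL₂(ℂ)`. -/
noncomputable def omega2 : PGL2C :=
  QuotientGroup.mk (Matrix.GeneralLinearGroup.mkOfDetNeZero !![(0 : ℂ), 1; 1, 0]
    (by simp [Matrix.det_fin_two_of]))

/-- `W`, the (Klein four) subgroup of `PGL₂(ℂ)` generated by `ω₁` and `ω₂`. -/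
noncomputable def Wgrp : Subgroup PGL2C :=
  Subgroup.closure {omega1, omega2}

/-!
The normalizer `N` of `W` acts by conjugation on the three non-identity elements
`ω₁, ω₂, ω₃ = ω₁ω₂` of `W`, which gives a homomorphism `N → S₃`. Its kernel is the centralizer
of `W`, and a matrix computation shows that this is `W` itself: a matrix commuting with
`diag(-1, 1)` up to a scalar is diagonal or antidiagonal, and commuting with `[[0,1],[1,0]]`
up to a scalar then pins it down to a scalar multiple of `1`, `ω₁`, `ω₂` or `ω₃`. The map is
onto because `[[1,1],[1,-1]]` exchanges `ω₁` and `ω₂`, while `[[1,1],[i,-i]]` permutes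
`ω₁ ↦ ω₃ ↦ ω₂ ↦ ω₁`, and a transposition together with a `3`-cycle generates `S₃`.
-/

open Matrix

section ConjugationOnNonIdentity

variable {G : Type*} [Group G] (H : Subgroup G)

abbrev Subgroup.NonIdentity : Type _ := {x : G // x ∈ H ∧ x ≠ 1}

instance : MulAction (Subgroup.normalizer (H : Set G)) H.NonIdentity where
  smul g x := ⟨g * x.1 * (g : G)⁻¹, (Subgroup.mem_normalizer_iff.mp g.2 x.1).mp x.2.1,
    fun h => x.2.2 (by simpa using h)⟩
  one_smul x := Subtype.ext (by simp [HSMul.hSMul])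
  mul_smul g h x := Subtype.ext (by simp [HSMul.hSMul, mul_assoc])

theorem Subgroup.NonIdentity.coe_smul (g : Subgroup.normalizer (H : Set G)) (x : H.NonIdentity) :
    ((g • x : H.NonIdentity) : G) = g * x * (g : G)⁻¹ := rfl

theorem Subgroup.ker_toPermHom_nonIdentity :
    (MulAction.toPermHom (Subgroup.normalizer (H : Set G)) H.NonIdentity).ker =
      (Subgroup.centralizer (H : Set G)).subgroupOf (Subgroup.normalizer (H : Set G)) := by
  ext g
  simp only [MonoidHom.mem_ker, Subgroup.mem_subgroupOf, Subgroup.mem_centralizer_iff,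
    Equiv.Perm.ext_iff, MulAction.toPermHom_apply, MulAction.toPerm_apply, Equiv.Perm.coe_one,
    id_eq, Subtype.ext_iff, Subgroup.NonIdentity.coe_smul, mul_inv_eq_iff_eq_mul, Subtype.forall]
  refine ⟨fun h x hx => ?_, fun h x hx => (h x hx.1).symm⟩
  rcases eq_or_ne x 1 with rfl | hx1
  · simp
  · exact (h x ⟨hx, hx1⟩).symm

end ConjugationOnNonIdentity

section Involutions

variable {G : Type*} [Group G]

theorem Subgroup.mem_closure_pair_of_commute_of_mul_self_eq_one {a b x : G} (ha : a * a = 1)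
    (hb : b * b = 1) (hab : Commute a b) :
    x ∈ Subgroup.closure {a, b} ↔ x = 1 ∨ x = a ∨ x = b ∨ x = a * b := by
  refine ⟨fun hx => ?_, ?_⟩
  · have hba : b * a = a * b := hab.eq.symm
    have haab : a * (a * b) = b := by rw [← mul_assoc, ha, one_mul]
    have hbab : b * (a * b) = a := by rw [← mul_assoc, hba, mul_assoc, hb, mul_one]
    have haba : a * b * a = b := by rw [mul_assoc, hba, ← mul_assoc, ha, one_mul]
    have habb : a * b * b = a := by rw [mul_assoc, hb, mul_one]
    have habab : a * b * (a * b) = 1 := by rw [← mul_assoc, haba, hb]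
    induction hx using Subgroup.closure_induction with
    | mem y hy => rcases hy with rfl | rfl <;> simp
    | one => simp
    | mul y z _ _ hy hz =>
      rcases hy with rfl | rfl | rfl | rfl <;> rcases hz with rfl | rfl | rfl | rfl <;>
        simp only [ha, hb, hba, haab, hbab, haba, habb, habab, one_mul, mul_one, true_or, or_true]
    | inv y _ hy =>
      rcases hy with rfl | rfl | rfl | rfl <;>
        simp only [inv_one, inv_eq_of_mul_eq_one_left ha, inv_eq_of_mul_eq_one_left hb,
          inv_eq_of_mul_eq_one_left habab, true_or, or_true]
  · rintro (rfl | rfl | rfl | rfl)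
    · exact one_mem _
    · exact Subgroup.subset_closure (by simp)
    · exact Subgroup.subset_closure (by simp)
    · exact mul_mem (Subgroup.subset_closure (by simp)) (Subgroup.subset_closure (by simp))

end Involutions

theorem Subgroup.mem_normalizer_of_conj_mem_of_closure_eq {G : Type*} [Group G] {H : Subgroup G}
    [Finite H] {S : Set G} (hS : Subgroup.closure S = H) {g : G} (h : ∀ s ∈ S, g * s * g⁻¹ ∈ H) :
    g ∈ Subgroup.normalizer (H : Set G) :=
  mem_normalizer_fintype fun _ hn =>
    (Subgroup.closure_le (H.comap (MulAut.conj g).toMonoidHom)).mpr h (hS ▸ hn)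

theorem Matrix.GeneralLinearGroup.mk_eq_mk_iff_exists_smul {n R : Type*} [Fintype n]
    [DecidableEq n] [CommRing R] {g h : GL n R} :
    (QuotientGroup.mk g : GL n R ⧸ Subgroup.center (GL n R)) = QuotientGroup.mk h ↔
      ∃ c : R, (h : Matrix n n R) = c • (g : Matrix n n R) := by
  rw [QuotientGroup.eq, mem_center_iff_val_mem_range_scalar]
  refine exists_congr fun c => ?_
  rw [eq_comm, Units.val_mul, Units.inv_mul_eq_iff_eq_mul, scalar_apply, ← smul_one_eq_diagonal,
    Matrix.mul_smul, mul_one]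

namespace PGL2C

open Subgroup Equiv

noncomputable def ofMatrix (A : Matrix (Fin 2) (Fin 2) ℂ) (hA : A.det ≠ 0) : PGL2C :=
  QuotientGroup.mk (GeneralLinearGroup.mkOfDetNeZero A hA)

theorem ofMatrix_mul {A B : Matrix (Fin 2) (Fin 2) ℂ} (hA : A.det ≠ 0) (hB : B.det ≠ 0) :
    ofMatrix A hA * ofMatrix B hB = ofMatrix (A * B) (by simp [hA, hB]) :=
  congrArg QuotientGroup.mk (Units.ext rfl)

theorem ofMatrix_eq_ofMatrix_iff {A B : Matrix (Fin 2) (Fin 2) ℂ} (hA : A.det ≠ 0)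
    (hB : B.det ≠ 0) : ofMatrix A hA = ofMatrix B hB ↔ ∃ c : ℂ, B = c • A :=
  GeneralLinearGroup.mk_eq_mk_iff_exists_smul

theorem ofMatrix_one : ofMatrix 1 (by simp) = 1 :=
  congrArg QuotientGroup.mk (Units.ext rfl)

theorem omega1_eq_ofMatrix : omega1 = ofMatrix !![-1, 0; 0, 1] (by simp [det_fin_two_of]) := rfl

theorem omega2_eq_ofMatrix : omega2 = ofMatrix !![0, 1; 1, 0] (by simp [det_fin_two_of]) := rfl

theorem omega1_mul_self : omega1 * omega1 = 1 := by
  rw [omega1_eq_ofMatrix, ofMatrix_mul, ← ofMatrix_one, ofMatrix_eq_ofMatrix_iff]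
  exact ⟨1, by ext i j; fin_cases i <;> fin_cases j <;> simp⟩

theorem omega2_mul_self : omega2 * omega2 = 1 := by
  rw [omega2_eq_ofMatrix, ofMatrix_mul, ← ofMatrix_one, ofMatrix_eq_ofMatrix_iff]
  exact ⟨1, by ext i j; fin_cases i <;> fin_cases j <;> simp⟩

theorem commute_omega1_omega2 : Commute omega1 omega2 := by
  rw [Commute, SemiconjBy, omega1_eq_ofMatrix, omega2_eq_ofMatrix, ofMatrix_mul, ofMatrix_mul,
    ofMatrix_eq_ofMatrix_iff]
  exact ⟨-1, by ext i j; fin_cases i <;> fin_cases j <;> simp⟩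

theorem omega1_ne_one : omega1 ≠ 1 := by
  rw [omega1_eq_ofMatrix, ← ofMatrix_one, Ne, ofMatrix_eq_ofMatrix_iff]
  rintro ⟨c, hc⟩
  have h00 := congrFun₂ hc 0 0
  have h11 := congrFun₂ hc 1 1
  simp only [one_apply_eq, Matrix.smul_apply, of_apply, cons_val', cons_val_zero,
    cons_val_fin_one, cons_val_one, smul_eq_mul, mul_neg, mul_one] at h00 h11
  subst h11
  norm_num at h00

theorem omega2_ne_one : omega2 ≠ 1 := by
  rw [omega2_eq_ofMatrix, ← ofMatrix_one, Ne, ofMatrix_eq_ofMatrix_iff]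
  rintro ⟨c, hc⟩
  simpa using congrFun₂ hc 0 0

theorem omega1_ne_omega2 : omega1 ≠ omega2 := by
  rw [omega1_eq_ofMatrix, omega2_eq_ofMatrix, Ne, ofMatrix_eq_ofMatrix_iff]
  rintro ⟨c, hc⟩
  simpa using congrFun₂ hc 0 1

theorem omega1_mem_Wgrp : omega1 ∈ Wgrp := Subgroup.subset_closure (by simp)

theorem omega2_mem_Wgrp : omega2 ∈ Wgrp := Subgroup.subset_closure (by simp)

theorem exists_eq_ofMatrix (g : PGL2C) : ∃ A hA, g = ofMatrix A hA := by
  obtain ⟨A, rfl⟩ := QuotientGroup.mk_surjective g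
  exact ⟨A, by simpa using (GeneralLinearGroup.det A).ne_zero, congrArg _ (Units.ext rfl)⟩

theorem diagonal_or_antidiagonal_of_commute_omega1 {A : Matrix (Fin 2) (Fin 2) ℂ}
    (hA : A.det ≠ 0) (h : Commute (ofMatrix A hA) omega1) :
    (A 0 1 = 0 ∧ A 1 0 = 0) ∨ (A 0 0 = 0 ∧ A 1 1 = 0) := by
  rw [Commute, SemiconjBy, omega1_eq_ofMatrix, ofMatrix_mul, ofMatrix_mul,
    ofMatrix_eq_ofMatrix_iff] at h
  obtain ⟨l, hl⟩ := h
  have e00 := congrFun₂ hl 0 0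
  have e01 := congrFun₂ hl 0 1
  have e10 := congrFun₂ hl 1 0
  have e11 := congrFun₂ hl 1 1
  simp only [mul_apply, Fin.sum_univ_two, of_apply, cons_val', cons_val_fin_one, cons_val_zero,
    cons_val_one, Matrix.smul_apply, smul_eq_mul, neg_mul, one_mul, zero_mul, add_zero, zero_add,
    mul_neg, mul_one, mul_zero, neg_inj] at e00 e01 e10 e11
  by_cases hl1 : l = 1
  · subst hl1
    exact Or.inl ⟨by linear_combination (-1 / 2 : ℂ) * e01, by linear_combination (1 / 2 : ℂ) * e10⟩
  · have hl1' : 1 - l ≠ 0 := sub_ne_zero.mpr (Ne.symm hl1)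
    exact Or.inr ⟨mul_left_cancel₀ hl1' (by linear_combination e00),
      mul_left_cancel₀ hl1' (by linear_combination e11)⟩

theorem mem_Wgrp_of_diagonal {A : Matrix (Fin 2) (Fin 2) ℂ} (hA : A.det ≠ 0) (h01 : A 0 1 = 0)
    (h10 : A 1 0 = 0) (h : Commute (ofMatrix A hA) omega2) : ofMatrix A hA ∈ Wgrp := by
  rw [Commute, SemiconjBy, omega2_eq_ofMatrix, ofMatrix_mul, ofMatrix_mul,
    ofMatrix_eq_ofMatrix_iff] at h
  obtain ⟨l, hl⟩ := h
  have e01 := congrFun₂ hl 0 1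
  have e10 := congrFun₂ hl 1 0
  simp only [mul_apply, Fin.sum_univ_two, of_apply, cons_val', cons_val_fin_one, cons_val_zero,
    cons_val_one, Matrix.smul_apply, smul_eq_mul, one_mul, zero_mul, add_zero, zero_add, mul_one,
    mul_zero] at e01 e10
  have hdet : A 0 0 * A 1 1 ≠ 0 := by simpa [det_fin_two, h01, h10] using hA
  have hl : l * l = 1 :=
    mul_right_cancel₀ (left_ne_zero_of_mul hdet) (by linear_combination -e10 - l * e01)
  rcases mul_self_eq_one_iff.mp hl with rfl | rfl
  · have h1 : ofMatrix 1 (by simp) = ofMatrix A hA := (ofMatrix_eq_ofMatrix_iff _ _).mpr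
      ⟨A 0 0, by ext i j; fin_cases i <;> fin_cases j <;> simp [h01, h10, e01]⟩
    rw [← h1, ofMatrix_one]
    exact one_mem _
  · have h1 : omega1 = ofMatrix A hA := (ofMatrix_eq_ofMatrix_iff _ _).mpr
      ⟨-A 0 0, by ext i j; fin_cases i <;> fin_cases j <;> simp [h01, h10, e01]⟩
    exact h1 ▸ omega1_mem_Wgrp

theorem mem_Wgrp_of_commute {g : PGL2C} (h1 : Commute g omega1) (h2 : Commute g omega2) :
    g ∈ Wgrp := by
  obtain ⟨A, hA, rfl⟩ := exists_eq_ofMatrix g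
  rcases diagonal_or_antidiagonal_of_commute_omega1 hA h1 with ⟨h01, h10⟩ | ⟨h00, h11⟩
  · exact mem_Wgrp_of_diagonal hA h01 h10 h2
  · -- right multiplication by `ω₂` swaps the columns, making the matrix diagonal
    have hmem : ofMatrix A hA * omega2 ∈ Wgrp := by
      have h2' : Commute (ofMatrix A hA * omega2) omega2 := h2.mul_left (Commute.refl _)
      rw [omega2_eq_ofMatrix, ofMatrix_mul] at h2' ⊢
      exact mem_Wgrp_of_diagonal _ (by simp [mul_apply, Fin.sum_univ_two, h00])
        (by simp [mul_apply, Fin.sum_univ_two, h11]) h2'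
    simpa [mul_assoc, omega2_mul_self] using mul_mem hmem omega2_mem_Wgrp

theorem mem_Wgrp_iff {x : PGL2C} :
    x ∈ Wgrp ↔ x = 1 ∨ x = omega1 ∨ x = omega2 ∨ x = omega1 * omega2 :=
  mem_closure_pair_of_commute_of_mul_self_eq_one omega1_mul_self omega2_mul_self
    commute_omega1_omega2

instance : Finite Wgrp :=
  Set.Finite.to_subtype <| (Set.toFinite {1, omega1, omega2, omega1 * omega2}).subset
    fun _ hx => by simpa using mem_Wgrp_iff.mp hx

theorem centralizer_Wgrp : centralizer (Wgrp : Set PGL2C) = Wgrp := by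
  refine le_antisymm (fun g hg => ?_) ?_
  · rw [Wgrp, centralizer_closure, mem_centralizer_iff] at hg
    exact mem_Wgrp_of_commute (hg _ (by simp)).symm (hg _ (by simp)).symm
  · refine le_centralizer_iff_isMulCommutative.mpr (isMulCommutative_closure ?_)
    rintro x (rfl | rfl) y (rfl | rfl)
    exacts [rfl, commute_omega1_omega2.eq, commute_omega1_omega2.eq.symm, rfl]

noncomputable def swapOmega : PGL2C :=
  ofMatrix !![1, 1; 1, -1] (by norm_num [det_fin_two_of])

noncomputable def cycleOmega : PGL2C :=
  ofMatrix !![1, 1; Complex.I, -Complex.I] (by norm_num [det_fin_two_of, Complex.ext_iff])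

theorem swapOmega_conj_omega1 : swapOmega * omega1 * swapOmega⁻¹ = omega2 := by
  rw [mul_inv_eq_iff_eq_mul, swapOmega, omega1_eq_ofMatrix, omega2_eq_ofMatrix, ofMatrix_mul,
    ofMatrix_mul, ofMatrix_eq_ofMatrix_iff]
  exact ⟨-1, by ext i j; fin_cases i <;> fin_cases j <;> simp [mul_apply, Fin.sum_univ_two]⟩

theorem swapOmega_conj_omega2 : swapOmega * omega2 * swapOmega⁻¹ = omega1 := by
  rw [mul_inv_eq_iff_eq_mul, swapOmega, omega1_eq_ofMatrix, omega2_eq_ofMatrix, ofMatrix_mul,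
    ofMatrix_mul, ofMatrix_eq_ofMatrix_iff]
  exact ⟨-1, by ext i j; fin_cases i <;> fin_cases j <;> simp [mul_apply, Fin.sum_univ_two]⟩

theorem cycleOmega_conj_omega1 : cycleOmega * omega1 * cycleOmega⁻¹ = omega1 * omega2 := by
  rw [mul_inv_eq_iff_eq_mul, cycleOmega, omega1_eq_ofMatrix, omega2_eq_ofMatrix, ofMatrix_mul,
    ofMatrix_mul, ofMatrix_mul, ofMatrix_eq_ofMatrix_iff]
  exact ⟨Complex.I, by ext i j; fin_cases i <;> fin_cases j <;> simp [mul_apply, Fin.sum_univ_two]⟩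

theorem cycleOmega_conj_omega2 : cycleOmega * omega2 * cycleOmega⁻¹ = omega1 := by
  rw [mul_inv_eq_iff_eq_mul, cycleOmega, omega1_eq_ofMatrix, omega2_eq_ofMatrix, ofMatrix_mul,
    ofMatrix_mul, ofMatrix_eq_ofMatrix_iff]
  exact ⟨-1, by ext i j; fin_cases i <;> fin_cases j <;> simp [mul_apply, Fin.sum_univ_two]⟩

theorem swapOmega_mem_normalizer : swapOmega ∈ normalizer (Wgrp : Set PGL2C) :=
  mem_normalizer_of_conj_mem_of_closure_eq (H := Wgrp) rfl <| by
    rintro s (rfl | rfl)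
    · rw [swapOmega_conj_omega1]; exact omega2_mem_Wgrp
    · rw [swapOmega_conj_omega2]; exact omega1_mem_Wgrp

theorem cycleOmega_mem_normalizer : cycleOmega ∈ normalizer (Wgrp : Set PGL2C) :=
  mem_normalizer_of_conj_mem_of_closure_eq (H := Wgrp) rfl <| by
    rintro s (rfl | rfl)
    · rw [cycleOmega_conj_omega1]; exact mul_mem omega1_mem_Wgrp omega2_mem_Wgrp
    · rw [cycleOmega_conj_omega2]; exact omega1_mem_Wgrp

theorem omega1_mul_omega2_ne_one : omega1 * omega2 ≠ 1 := by
  rw [Ne, mul_eq_one_iff_eq_inv, inv_eq_of_mul_eq_one_left omega2_mul_self]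
  exact omega1_ne_omega2

/-- Ordered `ω₁, ω₃, ω₂` so that conjugation by `cycleOmega` becomes `finRotate 3`. -/
noncomputable def omegaNonIdentity : Fin 3 → Wgrp.NonIdentity :=
  ![⟨omega1, omega1_mem_Wgrp, omega1_ne_one⟩,
    ⟨omega1 * omega2, mul_mem omega1_mem_Wgrp omega2_mem_Wgrp, omega1_mul_omega2_ne_one⟩,
    ⟨omega2, omega2_mem_Wgrp, omega2_ne_one⟩]

theorem omegaNonIdentity_bijective : Function.Bijective omegaNonIdentity := by
  refine ⟨fun i j hij => ?_, fun x => ?_⟩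
  · have hij' := congrArg Subtype.val hij
    fin_cases i <;> fin_cases j <;>
      simp_all [omegaNonIdentity, omega1_ne_omega2, omega1_ne_omega2.symm, omega1_ne_one,
        omega2_ne_one]
  · obtain ⟨x, hx, hx1⟩ := x
    rcases mem_Wgrp_iff.mp hx with rfl | rfl | rfl | rfl
    · exact absurd rfl hx1
    · exact ⟨0, rfl⟩
    · exact ⟨2, rfl⟩
    · exact ⟨1, rfl⟩

noncomputable def omegaEquiv : Fin 3 ≃ Wgrp.NonIdentity :=
  Equiv.ofBijective _ omegaNonIdentity_bijective

noncomputable def conjPerm : normalizer (Wgrp : Set PGL2C) →* Perm (Fin 3) :=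
  (omegaEquiv.symm.permCongrHom : Perm Wgrp.NonIdentity →* Perm (Fin 3)).comp
    (MulAction.toPermHom _ _)

theorem conjPerm_eq_of_conj {g : normalizer (Wgrp : Set PGL2C)} {σ : Perm (Fin 3)}
    (h : ∀ i, (g : PGL2C) * omegaNonIdentity i * (g : PGL2C)⁻¹ = omegaNonIdentity (σ i)) :
    conjPerm g = σ := by
  refine Equiv.ext fun i => ?_
  simp only [conjPerm, MonoidHom.coe_comp, MonoidHom.coe_coe, Function.comp_apply,
    permCongrHom_coe, permCongr_apply, symm_symm, MulAction.toPermHom_apply,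
    MulAction.toPerm_apply]
  rw [symm_apply_eq]
  exact Subtype.ext (h i)

theorem conjPerm_swapOmega : conjPerm ⟨swapOmega, swapOmega_mem_normalizer⟩ = swap 0 2 :=
  conjPerm_eq_of_conj fun i => by
    fin_cases i <;> simp [omegaNonIdentity, ← conj_mul, swapOmega_conj_omega1,
      swapOmega_conj_omega2, swap_apply_of_ne_of_ne, commute_omega1_omega2.eq]

theorem conjPerm_cycleOmega : conjPerm ⟨cycleOmega, cycleOmega_mem_normalizer⟩ = finRotate 3 :=
  have h : omega1 * omega2 * omega1 = omega2 := by
    rw [commute_omega1_omega2.eq, mul_assoc, omega1_mul_self, mul_one]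
  conjPerm_eq_of_conj fun i => by
    fin_cases i <;>
      simp [omegaNonIdentity, ← conj_mul, cycleOmega_conj_omega1, cycleOmega_conj_omega2, h]

theorem conjPerm_surjective : Function.Surjective conjPerm := by
  rw [← MonoidHom.range_eq_top, eq_top_iff,
    ← Perm.closure_prime_cycle_swap (by norm_num) isCycle_finRotate support_finRotate
      (⟨0, 2, by decide, rfl⟩ : Perm.IsSwap (swap (0 : Fin 3) 2)), closure_le]
  rintro _ (rfl | rfl)
  exacts [⟨_, conjPerm_cycleOmega⟩, ⟨_, conjPerm_swapOmega⟩]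

theorem ker_conjPerm : conjPerm.ker = Wgrp.subgroupOf (normalizer (Wgrp : Set PGL2C)) := by
  rw [conjPerm, MonoidHom.ker_mulEquiv_comp, ker_toPermHom_nonIdentity, centralizer_Wgrp]

end PGL2C

/-- The quotient of the normalizer of `W` in `PGL₂(ℂ)` by `W` is isomorphic to the
symmetric group `S₃` on three letters. -/
theorem statement0 :
    Nonempty ((↥(Subgroup.normalizer (Wgrp : Set PGL2C)) ⧸ Wgrp.subgroupOf (Subgroup.normalizer (Wgrp : Set PGL2C))) ≃* Equiv.Perm (Fin 3)) :=
  ⟨(QuotientGroup.quotientMulEquivOfEq PGL2C.ker_conjPerm.symm).trans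
    (QuotientGroup.quotientKerEquivOfSurjective _ PGL2C.conjPerm_surjective)⟩
end

section
/- Let R be a commutative ring and let a, b, c, d, x, y ∈ R satisfy a(1 + x³y³) + b(xy + x²y²) + c(x² + xy³) + d(y² + x³y) = 0. Set u = xy and w = c(x² − xy³) + d(x³y − y²). Then w² = a²(u⁶ + 1) + 2ab(u⁵ + u) + (b² + 2ab − 4cd)(u⁴ + u²) + (2a² + 2b² − 4c² − 4d²)u³. -/
/-- If `a(1 + x³y³) + b(xy + x²y²) + c(x² + xy³) + d(y² + x³y) = 0` in a commutative
ring, and `u = xy`, `w = c(x² − xy³) + d(x³y − y²)`, then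
`w² = a²(u⁶+1) + 2ab(u⁵+u) + (b²+2ab−4cd)(u⁴+u²) + (2a²+2b²−4c²−4d²)u³`. -/
theorem statement8 {R : Type*} [CommRing R] (a b c d x y u w : R)
    (h : a * (1 + x ^ 3 * y ^ 3) + b * (x * y + x ^ 2 * y ^ 2) +
        c * (x ^ 2 + x * y ^ 3) + d * (y ^ 2 + x ^ 3 * y) = 0)
    (hu : u = x * y)
    (hw : w = c * (x ^ 2 - x * y ^ 3) + d * (x ^ 3 * y - y ^ 2)) :
    w ^ 2 = a ^ 2 * (u ^ 6 + 1) + 2 * a * b * (u ^ 5 + u) +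
        (b ^ 2 + 2 * a * b - 4 * c * d) * (u ^ 4 + u ^ 2) +
        (2 * a ^ 2 + 2 * b ^ 2 - 4 * c ^ 2 - 4 * d ^ 2) * u ^ 3 := by
  subst hu hw
  linear_combination (c * (x ^ 2 + x * y ^ 3) + d * (y ^ 2 + x ^ 3 * y) -
    (a * (1 + x ^ 3 * y ^ 3) + b * (x * y + x ^ 2 * y ^ 2))) * h
end

section
/- Let K be a field of characteristic zero and let a, b, c, d, u, w ∈ K with u ≠ −1 and w² = a²(u⁶ + 1) + 2ab(u⁵ + u) + (b² + 2ab − 4cd)(u⁴ + u²) + (2a² + 2b² − 4c² − 4d²)u³. Set x₀ = −u/(u+1)² and y₀ = w/(u+1)³. Then y₀² = A₀x₀³ + B₀x₀² + C₀x₀ + D₀, where A₀ = 4(c − d)², B₀ = (3a − b)² − 4cd, C₀ = 2a(3a − b), and D₀ = a². -/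
/-! Homogenising the cubic `A₀x³ + B₀x² + C₀x + D₀` at `x = -u/(u+1)²` with the weight
`(u+1)⁶` gives exactly the sextic `S(u)`, and `y₀² = w²/(u+1)⁶ = S(u)/(u+1)⁶`. -/

theorem sextic_eq_homogenized_cubic {R : Type*} [CommRing R] (a b c d u : R) :
    a ^ 2 * (u ^ 6 + 1) + 2 * a * b * (u ^ 5 + u) +
        (b ^ 2 + 2 * a * b - 4 * c * d) * (u ^ 4 + u ^ 2) +
        (2 * a ^ 2 + 2 * b ^ 2 - 4 * c ^ 2 - 4 * d ^ 2) * u ^ 3 =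
      4 * (c - d) ^ 2 * (-u) ^ 3 + ((3 * a - b) ^ 2 - 4 * c * d) * (-u) ^ 2 * (u + 1) ^ 2 +
        2 * a * (3 * a - b) * (-u) * (u + 1) ^ 4 + a ^ 2 * (u + 1) ^ 6 := by
  ring

theorem statement9_general {K : Type*} [Field K] (a b c d u w : K)
    (hu : u ≠ -1)
    (h : w ^ 2 = a ^ 2 * (u ^ 6 + 1) + 2 * a * b * (u ^ 5 + u) +
        (b ^ 2 + 2 * a * b - 4 * c * d) * (u ^ 4 + u ^ 2) +
        (2 * a ^ 2 + 2 * b ^ 2 - 4 * c ^ 2 - 4 * d ^ 2) * u ^ 3)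
    (x₀ y₀ : K) (hx₀ : x₀ = -u / (u + 1) ^ 2) (hy₀ : y₀ = w / (u + 1) ^ 3) :
    y₀ ^ 2 = 4 * (c - d) ^ 2 * x₀ ^ 3 + ((3 * a - b) ^ 2 - 4 * c * d) * x₀ ^ 2 +
        2 * a * (3 * a - b) * x₀ + a ^ 2 := by
  have hu₁ : u + 1 ≠ 0 := fun h₀ => hu (eq_neg_of_add_eq_zero_left h₀)
  rw [hy₀, hx₀, div_pow, h, sextic_eq_homogenized_cubic]
  field_simp

/-- Given `w² = a²(u⁶+1) + 2ab(u⁵+u) + (b²+2ab−4cd)(u⁴+u²) + (2a²+2b²−4c²−4d²)u³` with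
`u ≠ −1`, the substitution `x₀ = −u/(u+1)²`, `y₀ = w/(u+1)³` satisfies
`y₀² = A₀x₀³ + B₀x₀² + C₀x₀ + D₀` with `A₀ = 4(c−d)²`, `B₀ = (3a−b)² − 4cd`,
`C₀ = 2a(3a−b)`, `D₀ = a²`. -/
theorem statement9 {K : Type*} [Field K] [CharZero K] (a b c d u w : K)
    (hu : u ≠ -1)
    (h : w ^ 2 = a ^ 2 * (u ^ 6 + 1) + 2 * a * b * (u ^ 5 + u) +
        (b ^ 2 + 2 * a * b - 4 * c * d) * (u ^ 4 + u ^ 2) +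
        (2 * a ^ 2 + 2 * b ^ 2 - 4 * c ^ 2 - 4 * d ^ 2) * u ^ 3)
    (x₀ y₀ : K) (hx₀ : x₀ = -u / (u + 1) ^ 2) (hy₀ : y₀ = w / (u + 1) ^ 3) :
    y₀ ^ 2 = 4 * (c - d) ^ 2 * x₀ ^ 3 + ((3 * a - b) ^ 2 - 4 * c * d) * x₀ ^ 2 +
        2 * a * (3 * a - b) * x₀ + a ^ 2 :=
  statement9_general a b c d u w hu h x₀ y₀ hx₀ hy₀
end

section
/- Let K be a field of characteristic zero and let a, b, c, d, u, w ∈ K with u ≠ 1 and w² = a²(u⁶ + 1) + 2ab(u⁵ + u) + (b² + 2ab − 4cd)(u⁴ + u²) + (2a² + 2b² − 4c² − 4d²)u³. Set x₁ = u/(u−1)² and y₁ = w/(u−1)³. Then y₁² = A₁x₁³ + B₁x₁² + C₁x₁ + D₁, where A₁ = 4(a + b)² − 4(c + d)², B₁ = (a + b)(9a + b) − 4cd, C₁ = 6a² + 2ab, and D₁ = a². -/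
theorem sextic_eq_cubic_homogenized {R : Type*} [CommRing R] (a b c d u : R) :
    a ^ 2 * (u ^ 6 + 1) + 2 * a * b * (u ^ 5 + u) +
        (b ^ 2 + 2 * a * b - 4 * c * d) * (u ^ 4 + u ^ 2) +
        (2 * a ^ 2 + 2 * b ^ 2 - 4 * c ^ 2 - 4 * d ^ 2) * u ^ 3 =
      (4 * (a + b) ^ 2 - 4 * (c + d) ^ 2) * u ^ 3 +
        ((a + b) * (9 * a + b) - 4 * c * d) * u ^ 2 * ((u - 1) ^ 2) +
        (6 * a ^ 2 + 2 * a * b) * u * ((u - 1) ^ 2) ^ 2 + a ^ 2 * ((u - 1) ^ 2) ^ 3 := by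
  ring

theorem statement10_general {K : Type*} [Field K] (a b c d u w : K)
    (hu : u ≠ 1)
    (h : w ^ 2 = a ^ 2 * (u ^ 6 + 1) + 2 * a * b * (u ^ 5 + u) +
        (b ^ 2 + 2 * a * b - 4 * c * d) * (u ^ 4 + u ^ 2) +
        (2 * a ^ 2 + 2 * b ^ 2 - 4 * c ^ 2 - 4 * d ^ 2) * u ^ 3)
    (x₁ y₁ : K) (hx₁ : x₁ = u / (u - 1) ^ 2) (hy₁ : y₁ = w / (u - 1) ^ 3) :
    y₁ ^ 2 = (4 * (a + b) ^ 2 - 4 * (c + d) ^ 2) * x₁ ^ 3 +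
        ((a + b) * (9 * a + b) - 4 * c * d) * x₁ ^ 2 +
        (6 * a ^ 2 + 2 * a * b) * x₁ + a ^ 2 := by
  have hv : u - 1 ≠ 0 := sub_ne_zero.mpr hu
  rw [hy₁, hx₁, div_pow, h, sextic_eq_cubic_homogenized]
  field_simp

/-- Given `w² = a²(u⁶+1) + 2ab(u⁵+u) + (b²+2ab−4cd)(u⁴+u²) + (2a²+2b²−4c²−4d²)u³` with
`u ≠ 1`, the substitution `x₁ = u/(u−1)²`, `y₁ = w/(u−1)³` satisfies
`y₁² = A₁x₁³ + B₁x₁² + C₁x₁ + D₁` with `A₁ = 4(a+b)² − 4(c+d)²`,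
`B₁ = (a+b)(9a+b) − 4cd`, `C₁ = 6a² + 2ab`, `D₁ = a²`. -/
theorem statement10 {K : Type*} [Field K] [CharZero K] (a b c d u w : K)
    (hu : u ≠ 1)
    (h : w ^ 2 = a ^ 2 * (u ^ 6 + 1) + 2 * a * b * (u ^ 5 + u) +
        (b ^ 2 + 2 * a * b - 4 * c * d) * (u ^ 4 + u ^ 2) +
        (2 * a ^ 2 + 2 * b ^ 2 - 4 * c ^ 2 - 4 * d ^ 2) * u ^ 3)
    (x₁ y₁ : K) (hx₁ : x₁ = u / (u - 1) ^ 2) (hy₁ : y₁ = w / (u - 1) ^ 3) :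
    y₁ ^ 2 = (4 * (a + b) ^ 2 - 4 * (c + d) ^ 2) * x₁ ^ 3 +
        ((a + b) * (9 * a + b) - 4 * c * d) * x₁ ^ 2 +
        (6 * a ^ 2 + 2 * a * b) * x₁ + a ^ 2 :=
  statement10_general a b c d u w hu h x₁ y₁ hx₁ hy₁
end

section
/- Let K be an algebraically closed field of characteristic zero. For all A, B, C, D ∈ K with A ≠ 0, there exist a, b, c, d ∈ K such that A = a², B = 2ab, C = b² + 2ab − 4dc, and D = 2a² + 2b² − 4c² − 4d². -/
/-- Over an algebraically closed field of characteristic zero, for all `A, B, C, D`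
with `A ≠ 0` there exist `a, b, c, d` with `A = a²`, `B = 2ab`, `C = b² + 2ab − 4dc`,
and `D = 2a² + 2b² − 4c² − 4d²`. -/
theorem statement12 {K : Type*} [Field K] [IsAlgClosed K] [CharZero K]
    (A B C D : K) (hA : A ≠ 0) :
    ∃ a b c d : K, A = a ^ 2 ∧ B = 2 * a * b ∧
      C = b ^ 2 + 2 * a * b - 4 * d * c ∧
      D = 2 * a ^ 2 + 2 * b ^ 2 - 4 * c ^ 2 - 4 * d ^ 2 := by
  obtain ⟨a, ha⟩ := IsAlgClosed.exists_pow_nat_eq A (n := 2) (by norm_num)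
  have ha0 : a ≠ 0 := by rintro rfl; simp at ha; exact hA ha.symm
  set b : K := B / (2 * a) with hb
  set P : K := (b ^ 2 + 2 * a * b - C) / 4 with hP
  set Q : K := (2 * a ^ 2 + 2 * b ^ 2 - D) / 4 with hQ
  clear_value b P Q
  obtain ⟨s, hs⟩ := IsAlgClosed.exists_pow_nat_eq (Q ^ 2 - 4 * P ^ 2) (n := 2) (by norm_num)
  obtain ⟨c, hc⟩ := IsAlgClosed.exists_pow_nat_eq ((Q + s) / 2) (n := 2) (by norm_num)
  obtain ⟨d0, hd0⟩ := IsAlgClosed.exists_pow_nat_eq ((Q - s) / 2) (n := 2) (by norm_num)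
  have hcd : (c * d0) ^ 2 = P ^ 2 := by
    have : (c * d0) ^ 2 = c ^ 2 * d0 ^ 2 := by ring
    rw [this, hc, hd0]
    field_simp
    linear_combination -hs
  have hcases : c * d0 = P ∨ c * d0 = -P := sq_eq_sq_iff_eq_or_eq_neg.mp hcd
  have key : ∃ d : K, d * c = P ∧ d ^ 2 = d0 ^ 2 := by
    rcases hcases with h | h
    · exact ⟨d0, by rw [mul_comm]; exact h, rfl⟩
    · exact ⟨-d0, by rw [neg_mul, mul_comm, h, neg_neg], by ring⟩
  obtain ⟨d, hdc, hdd⟩ := key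
  refine ⟨a, b, c, d, ha.symm, ?_, ?_, ?_⟩
  · rw [hb]; field_simp
  · linear_combination 4 * hdc + 4 * hP
  · have hsum : c ^ 2 + d ^ 2 = Q := by rw [hdd, hc, hd0]; ring
    linear_combination 4 * hsum + 4 * hQ
end

section
/- Let E be the elliptic curve over ℚ defined by the short Weierstrass equation y² = x³ + (32/3)x + 880/27 (which has nonzero discriminant). Then the rational point P = (−4/3, 4) lies on E and has infinite order in the group E(ℚ); that is, P is not a torsion point. -/
/-!
On a short Weierstrass curve whose coefficients are `2`-adic integers, a point with
`|x|₂ > 1` satisfies `|y|₂² = |x|₂³`, so the tangent slope `λ = (3x² + a₄) / (2y)` has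
`|λ|₂² = 4 |x|₂`; the doubled point has `x' = λ² - 2x` and hence `|x'|₂ = 4 |x|₂`.
The multiples `2ʲ • Q` of such a point `Q` therefore have pairwise different `|x|₂`, and `Q`
has infinite order. For `P = (-4/3, 4)` on `E₀` one computes
`6 • P = (-2845/1452, 21745/10648)`, whose `x`-coordinate has `|x|₂ = 4`, so `P` has infinite
order too.
-/

open IsAbsoluteValue WeierstrassCurve WeierstrassCurve.Affine

theorem padicNorm.add_eq_left_of_lt {p : ℕ} [Fact p.Prime] {q r : ℚ}
    (h : padicNorm p r < padicNorm p q) : padicNorm p (q + r) = padicNorm p q := by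
  rw [padicNorm.add_eq_max_of_ne h.ne', max_eq_left h.le]

theorem padicNorm_natCast_div_le_one {p : ℕ} [Fact p.Prime] (m n : ℕ) (hn : ¬p ∣ n) :
    padicNorm p (m / n) ≤ 1 := by
  rw [padicNorm.div, (padicNorm.nat_eq_one_iff n).2 hn, div_one]
  exact padicNorm.of_nat m

theorem padicNorm_two_two : padicNorm 2 2 = 2⁻¹ := by
  simpa using padicNorm.padicNorm_p_of_prime (p := 2)

theorem padicNorm_two_three : padicNorm 2 3 = 1 := by
  simpa using (padicNorm.nat_eq_one_iff (p := 2) 3).2 (by decide)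

namespace WeierstrassCurve.Affine

section ShortNF

variable {R : Type*} [CommRing R] {W : WeierstrassCurve.Affine R} [W.IsShortNF]

theorem negY_of_isShortNF (x y : R) : W.negY x y = -y := by
  simp [negY]

theorem addX_of_isShortNF (x₁ x₂ ℓ : R) : W.addX x₁ x₂ ℓ = ℓ ^ 2 - x₁ - x₂ := by
  simp [addX]

end ShortNF

section Field

variable {F : Type*} [Field F] [DecidableEq F] {W : WeierstrassCurve.Affine F}

theorem slope_self_of_isShortNF [W.IsShortNF] {x y : F} (hy : y ≠ W.negY x y) :
    W.slope x x y y = (3 * x ^ 2 + W.a₄) / (2 * y) := by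
  rw [slope_of_Y_ne rfl hy, negY_of_isShortNF]
  simp only [a₁_of_isShortNF, a₂_of_isShortNF]
  ring_nf

theorem Point.some_add_some_eq {x₁ y₁ x₂ y₂ x₃ y₃ : F} {h₁ : W.Nonsingular x₁ y₁}
    {h₂ : W.Nonsingular x₂ y₂} (h₃ : W.Nonsingular x₃ y₃)
    (hxy : ¬(x₁ = x₂ ∧ y₁ = W.negY x₂ y₂))
    (hx₃ : W.addX x₁ x₂ (W.slope x₁ x₂ y₁ y₂) = x₃)
    (hy₃ : W.addY x₁ x₂ y₁ (W.slope x₁ x₂ y₁ y₂) = y₃) :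
    some _ _ h₁ + some _ _ h₂ = some _ _ h₃ := by
  subst hx₃ hy₃
  exact add_some hxy

end Field

variable {W : WeierstrassCurve.Affine ℚ}

def Point.padicNormX (p : ℕ) : W.Point → ℚ
  | zero => 0
  | some x _ _ => padicNorm p x

section Padic

variable [W.IsShortNF] {p : ℕ} [Fact p.Prime] {x y : ℚ}
  (ha₄ : padicNorm p W.a₄ ≤ 1) (ha₆ : padicNorm p W.a₆ ≤ 1)
include ha₄ ha₆

theorem padicNorm_Y_sq (h : W.Equation x y) (hx : 1 < padicNorm p x) :
    padicNorm p y ^ 2 = padicNorm p x ^ 3 := by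
  have hcurve : y ^ 2 = x ^ 3 + (W.a₄ * x + W.a₆) := by
    rw [equation_iff] at h
    simp only [a₁_of_isShortNF, a₂_of_isShortNF, a₃_of_isShortNF] at h
    linear_combination h
  have hlow : padicNorm p (W.a₄ * x + W.a₆) < padicNorm p (x ^ 3) := by
    calc padicNorm p (W.a₄ * x + W.a₆)
        ≤ max (padicNorm p W.a₄ * padicNorm p x) (padicNorm p W.a₆) := by
          rw [← padicNorm.mul]; exact padicNorm.nonarchimedean
      _ ≤ padicNorm p x :=
          max_le (mul_le_of_le_one_left (padicNorm.nonneg _) ha₄) (ha₆.trans hx.le)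
      _ < padicNorm p x ^ 3 := lt_self_pow₀ hx (by norm_num)
      _ = padicNorm p (x ^ 3) := (abv_pow _ _ _).symm
  rw [← abv_pow (padicNorm p), ← abv_pow (padicNorm p), hcurve,
    padicNorm.add_eq_left_of_lt hlow]

theorem Y_ne_negY_of_one_lt_padicNorm (h : W.Equation x y) (hx : 1 < padicNorm p x) :
    y ≠ W.negY x y := by
  have hy : y ≠ 0 := by
    rintro rfl
    have := padicNorm_Y_sq ha₄ ha₆ h hx
    rw [padicNorm.zero] at this
    nlinarith [pow_pos (zero_lt_one.trans hx) 3]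
  rw [negY_of_isShortNF]
  exact fun hyy ↦ hy (by linarith)

end Padic

section Doubling

variable [W.IsShortNF] {x y : ℚ}
  (ha₄ : padicNorm 2 W.a₄ ≤ 1) (ha₆ : padicNorm 2 W.a₆ ≤ 1)
include ha₄ ha₆

theorem padicNorm_slope_self_sq (h : W.Equation x y) (hx : 1 < padicNorm 2 x) :
    padicNorm 2 (W.slope x x y y) ^ 2 = 4 * padicNorm 2 x := by
  have h3x2 : padicNorm 2 (3 * x ^ 2) = padicNorm 2 x ^ 2 := by
    rw [padicNorm.mul, padicNorm_two_three, one_mul, abv_pow (padicNorm 2)]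
  have ha₄_lt : padicNorm 2 W.a₄ < padicNorm 2 (3 * x ^ 2) := by
    rw [h3x2]; exact ha₄.trans_lt (one_lt_pow₀ hx two_ne_zero)
  have hnum : padicNorm 2 (3 * x ^ 2 + W.a₄) = padicNorm 2 x ^ 2 := by
    rw [padicNorm.add_eq_left_of_lt ha₄_lt, h3x2]
  have hx0 : padicNorm 2 x ≠ 0 := (zero_lt_one.trans hx).ne'
  rw [slope_self_of_isShortNF (Y_ne_negY_of_one_lt_padicNorm ha₄ ha₆ h hx), padicNorm.div,
    padicNorm.mul, div_pow, mul_pow, hnum, padicNorm_Y_sq ha₄ ha₆ h hx, padicNorm_two_two]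
  field_simp
  ring

theorem padicNorm_addX_slope_self (h : W.Equation x y) (hx : 1 < padicNorm 2 x) :
    padicNorm 2 (W.addX x x (W.slope x x y y)) = 4 * padicNorm 2 x := by
  have hslope := padicNorm_slope_self_sq ha₄ ha₆ h hx
  have h2x : padicNorm 2 (-(2 * x)) < padicNorm 2 (W.slope x x y y ^ 2) := by
    rw [padicNorm.neg, padicNorm.mul, padicNorm_two_two, abv_pow (padicNorm 2), hslope]
    linarith
  rw [addX_of_isShortNF, sub_sub, ← two_mul, sub_eq_add_neg,
    padicNorm.add_eq_left_of_lt h2x, abv_pow (padicNorm 2), hslope]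

theorem Point.padicNormX_add_self {P : W.Point} (hP : 1 < P.padicNormX 2) :
    (P + P).padicNormX 2 = 4 * P.padicNormX 2 := by
  cases P with
  | zero => exact absurd hP (by simp [padicNormX])
  | some x y h =>
    rw [add_self_of_Y_ne (Y_ne_negY_of_one_lt_padicNorm ha₄ ha₆ h.1 hP)]
    exact padicNorm_addX_slope_self ha₄ ha₆ h.1 hP

theorem Point.padicNormX_two_pow_nsmul {P : W.Point} (hP : 1 < P.padicNormX 2) (j : ℕ) :
    (2 ^ j • P).padicNormX 2 = 4 ^ j * P.padicNormX 2 := by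
  induction j with
  | zero => simp
  | succ j ih =>
    have hj : 1 < (2 ^ j • P).padicNormX 2 := by
      rw [ih]
      exact hP.trans_le <| le_mul_of_one_le_left (zero_le_one.trans hP.le) <|
        one_le_pow₀ (by norm_num)
    rw [pow_succ, mul_nsmul, two_nsmul, padicNormX_add_self ha₄ ha₆ hj, ih]
    ring

theorem Point.not_isOfFinAddOrder_of_one_lt_padicNormX {P : W.Point}
    (hP : 1 < P.padicNormX 2) : ¬IsOfFinAddOrder P := by
  rw [← infinite_multiples]
  refine Set.infinite_of_injective_forall_mem (f := fun j : ℕ ↦ 2 ^ j • P)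
    (fun j k hjk ↦ ?_) (fun j ↦ ⟨2 ^ j, rfl⟩)
  have h4 := congrArg (Point.padicNormX 2) hjk
  simp only [padicNormX_two_pow_nsmul ha₄ ha₆ hP] at h4
  exact Nat.pow_right_injective (by norm_num : 2 ≤ 4)
    (by exact_mod_cast mul_right_cancel₀ (zero_lt_one.trans hP).ne' h4)

end Doubling

end WeierstrassCurve.Affine

abbrev E₀ : WeierstrassCurve.Affine ℚ :=
  { a₁ := 0, a₂ := 0, a₃ := 0, a₄ := 32 / 3, a₆ := 880 / 27 }

namespace E₀

instance : E₀.IsShortNF := ⟨rfl, rfl, rfl⟩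

theorem Δ_ne_zero : E₀.Δ ≠ 0 := by
  norm_num [Δ_of_isShortNF]

theorem nonsingular_of_eq {x y : ℚ} (h : y ^ 2 = x ^ 3 + 32 / 3 * x + 880 / 27) :
    E₀.Nonsingular x y := by
  rw [← equation_iff_nonsingular_of_Δ_ne_zero Δ_ne_zero, equation_iff]
  norm_num [h]

theorem nonsingular_P : E₀.Nonsingular (-4 / 3) 4 := nonsingular_of_eq (by norm_num)

theorem nonsingular_Q : E₀.Nonsingular (-2845 / 1452) (21745 / 10648) :=
  nonsingular_of_eq (by norm_num)

theorem six_nsmul_P : 6 • Point.some _ _ nonsingular_P = Point.some _ _ nonsingular_Q := by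
  set P := Point.some _ _ nonsingular_P
  have h2 : P + P = Point.some (20 / 3) (-20) (nonsingular_of_eq (by norm_num)) :=
    Point.some_add_some_eq _ (by norm_num [negY]) (by norm_num [addX, Affine.slope, negY])
      (by norm_num [addY, negAddY, addX, Affine.slope, negY])
  have h3 : P + P + P = Point.some (11 / 3) 11 (nonsingular_of_eq (by norm_num)) := by
    rw [h2]
    exact Point.some_add_some_eq _ (by norm_num [negY]) (by norm_num [addX, Affine.slope, negY])
      (by norm_num [addY, negAddY, addX, Affine.slope, negY])
  rw [show 6 • P = (P + P + P) + (P + P + P) by abel, h3]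
  exact Point.some_add_some_eq _ (by norm_num [negY]) (by norm_num [addX, Affine.slope, negY])
    (by norm_num [addY, negAddY, addX, Affine.slope, negY])

theorem padicNorm_a₄_le_one : padicNorm 2 E₀.a₄ ≤ 1 := by
  rw [show E₀.a₄ = (32 : ℕ) / (3 : ℕ) by norm_num]
  exact padicNorm_natCast_div_le_one 32 3 (by decide)

theorem padicNorm_a₆_le_one : padicNorm 2 E₀.a₆ ≤ 1 := by
  rw [show E₀.a₆ = (880 : ℕ) / (27 : ℕ) by norm_num]
  exact padicNorm_natCast_div_le_one 880 27 (by decide)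

theorem padicNormX_Q : (Point.some _ _ nonsingular_Q).padicNormX 2 = 4 := by
  rw [Point.padicNormX, neg_div, padicNorm.neg,
    show (2845 / 1452 : ℚ) = (2845 : ℕ) / (363 : ℕ) / 2 ^ 2 by norm_num, padicNorm.div,
    padicNorm.div, (padicNorm.nat_eq_one_iff 2845).2 (by decide),
    (padicNorm.nat_eq_one_iff 363).2 (by decide), abv_pow (padicNorm 2), padicNorm_two_two]
  norm_num

theorem not_isOfFinAddOrder_P : ¬IsOfFinAddOrder (Point.some _ _ nonsingular_P) := fun h ↦
  Point.not_isOfFinAddOrder_of_one_lt_padicNormX padicNorm_a₄_le_one padicNorm_a₆_le_one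
    (by rw [padicNormX_Q]; norm_num) (six_nsmul_P ▸ h.nsmul)

end E₀

/-- On the elliptic curve `E : y² = x³ + (32/3)x + 880/27` over `ℚ` (which has nonzero
discriminant), the rational point `P = (−4/3, 4)` lies on `E` and has infinite order in
`E(ℚ)`. -/
theorem statement14 (E : WeierstrassCurve.Affine ℚ)
    (hE : E = { a₁ := 0, a₂ := 0, a₃ := 0, a₄ := 32 / 3, a₆ := 880 / 27 }) :
    E.Δ ≠ 0 ∧
    ∃ h : E.Nonsingular (-4 / 3) 4,
      ¬ IsOfFinAddOrder (WeierstrassCurve.Affine.Point.some _ _ h) := by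
  subst hE
  exact ⟨E₀.Δ_ne_zero, E₀.nonsingular_P, E₀.not_isOfFinAddOrder_P⟩
end
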